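/- arXiv:2602.10348 — 10 statements merged into one kernel-verified Lean document; each statement's English description precedes it below -/
import Mathlib

section
/- Let $C'$ be a $(p+q) \times (p+q)$ real symmetric positive definite matrix with leading principal $p \times p$ block $C$, and let $G' \in \mathbb{R}^{(p+q) \times k}$ be a matrix whose first $p$ rows form the matrix $G \in \mathbb{R}^{p \times k}$. Then $G'^{\top} C'^{-1} G' - G^{\top} C^{-1} G$ is positive semidefinite. -/
/-!
For `A` positive definite and any `E`, the matrix `P = A⁻¹ - E (Eᴴ A E)⁻¹ Eᴴ` satisfies
`Pᴴ A P = P`, hence is positive semidefinite; this uses only `M⁻¹ M M⁻¹ = M⁻¹`, which holds for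
every square matrix (Lean's `M⁻¹` is `0` when `M` is singular). Taking for `E` the inclusion of
the first block of coordinates, `Eᴴ A E` is the leading block `C` and the information difference
is `G'ᴴ P G'`.
-/

open Matrix

namespace Matrix

variable {m n k R K : Type*} [Fintype m] [Fintype n] [Fintype k] [DecidableEq m] [DecidableEq n]

theorem nonsing_inv_mul_mul_nonsing_inv [CommRing R] (M : Matrix n n R) :
    M⁻¹ * M * M⁻¹ = M⁻¹ := by
  by_cases h : IsUnit M.det
  · rw [nonsing_inv_mul _ h, Matrix.one_mul]
  · simp [nonsing_inv_apply_not_isUnit _ h]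

variable [Field K] [PartialOrder K] [StarRing K]

theorem PosDef.posSemidef_inv_sub_compression {A : Matrix n n K} (hA : A.PosDef)
    (E : Matrix n m K) : (A⁻¹ - E * (Eᴴ * A * E)⁻¹ * Eᴴ).PosSemidef := by
  set M := Eᴴ * A * E
  set P := A⁻¹ - E * M⁻¹ * Eᴴ
  have hAh : Aᴴ = A := hA.isHermitian.eq
  have hMh : (M⁻¹)ᴴ = M⁻¹ := by
    rw [conjTranspose_nonsing_inv]
    simp only [M, conjTranspose_mul, conjTranspose_conjTranspose, hAh, Matrix.mul_assoc]
  have hPh : Pᴴ = P := by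
    simp only [P, conjTranspose_sub, conjTranspose_mul, conjTranspose_nonsing_inv, hAh, hMh,
      conjTranspose_conjTranspose, Matrix.mul_assoc]
  have hAdet : IsUnit A.det := (isUnit_iff_isUnit_det A).1 hA.isUnit
  have hMM : M⁻¹ * (Eᴴ * (A * (E * (M⁻¹ * Eᴴ)))) = M⁻¹ * Eᴴ :=
    calc M⁻¹ * (Eᴴ * (A * (E * (M⁻¹ * Eᴴ)))) = M⁻¹ * M * M⁻¹ * Eᴴ := by
          simp only [M, Matrix.mul_assoc]
      _ = M⁻¹ * Eᴴ := by rw [nonsing_inv_mul_mul_nonsing_inv]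
  have hPAP : Pᴴ * A * P = P := by
    rw [hPh]
    simp only [P, Matrix.sub_mul, Matrix.mul_sub, Matrix.mul_assoc]
    rw [hMM, mul_nonsing_inv _ hAdet, nonsing_inv_mul_cancel_left _ _ hAdet, Matrix.mul_one,
      Matrix.mul_one]
    abel
  simpa [hPAP] using hA.posSemidef.conjTranspose_mul_mul_same P

theorem PosDef.posSemidef_sub_submatrix {A : Matrix n n K} (hA : A.PosDef) (f : m → n)
    (B : Matrix n k K) :
    (Bᴴ * A⁻¹ * B - (B.submatrix f id)ᴴ * (A.submatrix f f)⁻¹ * B.submatrix f id).PosSemidef := by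
  set E : Matrix n m K := (1 : Matrix n n K).submatrix id f
  have hEB : Eᴴ * B = B.submatrix f id := by
    ext i j
    simp [E, mul_apply, one_apply]
  have hBE : Bᴴ * E = (B.submatrix f id)ᴴ := by
    rw [← hEB, conjTranspose_mul, conjTranspose_conjTranspose]
  have hEAE : Eᴴ * A * E = A.submatrix f f := by
    ext i j
    simp [E, mul_apply, one_apply]
  have h := (hA.posSemidef_inv_sub_compression E).conjTranspose_mul_mul_same B
  rw [← hBE, ← hEB, ← hEAE]
  simpa only [Matrix.mul_sub, Matrix.sub_mul, Matrix.mul_assoc] using h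

end Matrix

/-- If `C'` is a real symmetric positive definite `(p+q) × (p+q)` matrix with leading
principal `p × p` block `C`, and `G'` is a `(p+q) × k` matrix whose first `p` rows form
`G`, then `G'ᵀ C'⁻¹ G' - Gᵀ C⁻¹ G` is positive semidefinite. -/
theorem stacked_information_monotone
    (p q k : ℕ) (C' : Matrix (Fin p ⊕ Fin q) (Fin p ⊕ Fin q) ℝ) (hC' : C'.PosDef)
    (C : Matrix (Fin p) (Fin p) ℝ) (hC : C = C'.toBlocks₁₁)
    (G' : Matrix (Fin p ⊕ Fin q) (Fin k) ℝ)
    (G : Matrix (Fin p) (Fin k) ℝ) (hG : G = G'.submatrix Sum.inl id) :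
    (G'ᵀ * C'⁻¹ * G' - Gᵀ * C⁻¹ * G).PosSemidef := by
  subst hC hG
  have hblock : C'.toBlocks₁₁ = C'.submatrix Sum.inl Sum.inl := rfl
  simpa only [hblock, conjTranspose_eq_transpose_of_trivial, transpose_submatrix] using
    hC'.posSemidef_sub_submatrix Sum.inl G'
end

section
/- Let $C'$ be a $(p+q) \times (p+q)$ real symmetric positive definite matrix with leading principal $p \times p$ block $C$, and let $G' \in \mathbb{R}^{(p+q) \times k}$ be a matrix whose first $p$ rows form the matrix $G \in \mathbb{R}^{p \times k}$. If both $G^{\top} C^{-1} G$ and $G'^{\top} C'^{-1} G'$ are positive definite, then $(G^{\top} C^{-1} G)^{-1} - (G'^{\top} C'^{-1} G')^{-1}$ is positive semidefinite. -/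
/-!
The proof rests on Schur complements: a block matrix `[[C, G], [Gᴴ, D]]` with `C`
positive definite is positive semidefinite iff `D - Gᴴ C⁻¹ G` is. Taking `D = G'ᴴ C'⁻¹ G'` makes
`[[C', G'], [G'ᴴ, D]]` positive semidefinite; its principal submatrix `[[C, G], [Gᴴ, D]]` is then
positive semidefinite too, so `Gᴴ C⁻¹ G ≤ G'ᴴ C'⁻¹ G'` in the Loewner order. Inversion reverses
this order: if `0 < A ≤ B` then `[[B, 1], [1, A⁻¹]]` is positive semidefinite (its Schur complement
with respect to `A⁻¹` is `B - A`), and its Schur complement with respect to `B` is `A⁻¹ - B⁻¹`.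
-/

open Matrix

open scoped MatrixOrder ComplexOrder

namespace Matrix

theorem fromBlocks_submatrix_sum_map {l m n o l' m' n' o' α : Type*}
    (A : Matrix n l α) (B : Matrix n m α) (C : Matrix o l α) (D : Matrix o m α)
    (e₁ : n' → n) (e₂ : o' → o) (f₁ : l' → l) (f₂ : m' → m) :
    (fromBlocks A B C D).submatrix (Sum.map e₁ e₂) (Sum.map f₁ f₂) =
      fromBlocks (A.submatrix e₁ f₁) (B.submatrix e₁ f₂) (C.submatrix e₂ f₁)
        (D.submatrix e₂ f₂) := by
  ext (i | i) (j | j) <;> rfl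

variable {𝕜 m n : Type*} [RCLike 𝕜] [Fintype n] [DecidableEq n]

theorem PosDef.inv_anti {A B : Matrix n n 𝕜} (hA : A.PosDef) (hAB : A ≤ B) : B⁻¹ ≤ A⁻¹ := by
  have hB : B.PosDef := by simpa using hA.add_posSemidef hAB
  let _ := hA.isUnit.invertible
  let _ := hA.inv.isUnit.invertible
  let _ := hB.isUnit.invertible
  have hM : (fromBlocks B 1 1 A⁻¹).PosSemidef := by
    have := (PosDef.fromBlocks₂₂ B 1 hA.inv).mpr
    rw [conjTranspose_one, mul_one, one_mul, inv_inv_of_invertible] at this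
    exact this hAB
  have := (PosDef.fromBlocks₁₁ 1 A⁻¹ hB).mp
  rw [conjTranspose_one, mul_one, one_mul] at this
  exact this hM

theorem PosDef.conjTranspose_mul_inv_mul_submatrix_le [Fintype m] [DecidableEq m] {k : Type*}
    [Fintype k] {C : Matrix n n 𝕜} (hC : C.PosDef) (G : Matrix n k 𝕜) {e : m → n}
    (he : Function.Injective e) :
    (G.submatrix e id)ᴴ * (C.submatrix e e)⁻¹ * G.submatrix e id ≤ Gᴴ * C⁻¹ * G := by
  let _ := hC.isUnit.invertible
  let _ := (hC.submatrix he).isUnit.invertible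
  have hM : (fromBlocks C G Gᴴ (Gᴴ * C⁻¹ * G)).PosSemidef :=
    (PosDef.fromBlocks₁₁ G _ hC).mpr (by simpa using PosSemidef.zero)
  have hM' := hM.submatrix (Sum.map e id)
  rw [fromBlocks_submatrix_sum_map] at hM'
  exact (PosDef.fromBlocks₁₁ _ _ (hC.submatrix he)).mp hM'

end Matrix

theorem qif_asymptotic_variance_monotone_general
    (p q k : ℕ) (C' : Matrix (Fin p ⊕ Fin q) (Fin p ⊕ Fin q) ℝ) (hC' : C'.PosDef)
    (C : Matrix (Fin p) (Fin p) ℝ) (hC : C = C'.toBlocks₁₁)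
    (G' : Matrix (Fin p ⊕ Fin q) (Fin k) ℝ)
    (G : Matrix (Fin p) (Fin k) ℝ) (hG : G = G'.submatrix Sum.inl id)
    (hGCG : (Gᵀ * C⁻¹ * G).PosDef) :
    ((Gᵀ * C⁻¹ * G)⁻¹ - (G'ᵀ * C'⁻¹ * G')⁻¹).PosSemidef := by
  subst hC hG
  have hle := hC'.conjTranspose_mul_inv_mul_submatrix_le G' Sum.inl_injective
  rw [conjTranspose_eq_transpose_of_trivial, conjTranspose_eq_transpose_of_trivial] at hle
  exact hGCG.inv_anti hle

/-- If `C'` is a real symmetric positive definite `(p+q) × (p+q)` matrix with leading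
principal `p × p` block `C`, `G'` is a `(p+q) × k` matrix whose first `p` rows form `G`,
and both information matrices `Gᵀ C⁻¹ G` and `G'ᵀ C'⁻¹ G'` are positive definite, then
`(Gᵀ C⁻¹ G)⁻¹ - (G'ᵀ C'⁻¹ G')⁻¹` is positive semidefinite. -/
theorem qif_asymptotic_variance_monotone
    (p q k : ℕ) (C' : Matrix (Fin p ⊕ Fin q) (Fin p ⊕ Fin q) ℝ) (hC' : C'.PosDef)
    (C : Matrix (Fin p) (Fin p) ℝ) (hC : C = C'.toBlocks₁₁)
    (G' : Matrix (Fin p ⊕ Fin q) (Fin k) ℝ)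
    (G : Matrix (Fin p) (Fin k) ℝ) (hG : G = G'.submatrix Sum.inl id)
    (hGCG : (Gᵀ * C⁻¹ * G).PosDef) (hGCG' : (G'ᵀ * C'⁻¹ * G').PosDef) :
    ((Gᵀ * C⁻¹ * G)⁻¹ - (G'ᵀ * C'⁻¹ * G')⁻¹).PosSemidef :=
  qif_asymptotic_variance_monotone_general p q k C' hC' C hC G' G hG hGCG
end

section
/- Let $C$ be an $n \times n$ real symmetric positive definite matrix, let $G \in \mathbb{R}^{n \times k}$ be such that $G^{\top} C^{-1} G$ is positive definite, and let $H \in \mathbb{R}^{n \times m}$ be arbitrary. Then $H^{\top} C H - H^{\top} G \,(G^{\top} C^{-1} G)^{-1}\, G^{\top} H$ is positive semidefinite. -/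
/-!
With `u = C^{-1/2} G` and `v = C^{1/2} H`, the claim is the Cauchy–Schwarz inequality
`vᴴ v ≥ vᴴ u (uᴴ u)⁻¹ uᴴ v`, i.e. the Schur complement of the Gram matrix of `[u v]`. To avoid
square roots, write that Gram matrix as `diag(G, H)ᴴ [[C⁻¹, 1], [1, C]] diag(G, H)`; the middle
matrix is positive semidefinite because its Schur complement `C - C⁻¹⁻¹` vanishes.
-/

open Matrix

namespace Matrix

variable {K l m n : Type*} [Field K] [PartialOrder K] [StarRing K] [StarOrderedRing K]
  [Fintype n] [DecidableEq n]

theorem PosDef.posSemidef_fromBlocks_inv_one_one_self {C : Matrix n n K} (hC : C.PosDef) :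
    (fromBlocks C⁻¹ 1 1 C).PosSemidef := by
  have := hC.isUnit.invertible
  have := hC.inv.isUnit.invertible
  have hschur := (PosDef.fromBlocks₁₁ (1 : Matrix n n K) C hC.inv).2
  rw [conjTranspose_one] at hschur
  apply hschur
  rw [Matrix.one_mul, Matrix.mul_one, inv_inv_of_invertible, sub_self]
  exact PosSemidef.zero

omit [PartialOrder K] [StarOrderedRing K] in
theorem fromBlocks_conjTranspose_mul_inv_one_one_mul (C : Matrix n n K) (G : Matrix n l K)
    (H : Matrix n m K) :
    (fromBlocks G 0 0 H)ᴴ * fromBlocks C⁻¹ 1 1 C * fromBlocks G 0 0 H =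
      fromBlocks (Gᴴ * C⁻¹ * G) (Gᴴ * H) (Hᴴ * G) (Hᴴ * C * H) := by
  simp [fromBlocks_conjTranspose, fromBlocks_multiply, Matrix.mul_assoc]

theorem PosDef.posSemidef_sub_mul_inv_mul [Fintype l] [Fintype m] [DecidableEq l]
    {C : Matrix n n K} (hC : C.PosDef) (G : Matrix n l K) (hG : (Gᴴ * C⁻¹ * G).PosDef)
    (H : Matrix n m K) :
    (Hᴴ * C * H - Hᴴ * G * (Gᴴ * C⁻¹ * G)⁻¹ * Gᴴ * H).PosSemidef := by
  have := hG.isUnit.invertible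
  have hblock : (fromBlocks (Gᴴ * C⁻¹ * G) (Gᴴ * H) (Gᴴ * H)ᴴ (Hᴴ * C * H)).PosSemidef := by
    rw [conjTranspose_mul, conjTranspose_conjTranspose,
      ← fromBlocks_conjTranspose_mul_inv_one_one_mul]
    exact hC.posSemidef_fromBlocks_inv_one_one_self.conjTranspose_mul_mul_same _
  simpa only [conjTranspose_mul, conjTranspose_conjTranspose, Matrix.mul_assoc] using
    (PosDef.fromBlocks₁₁ _ _ hG).1 hblock

end Matrix

/-- Matrix Cauchy–Schwarz inequality in the Loewner order: for a real symmetric positive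
definite `n × n` matrix `C`, an `n × k` matrix `G` with `Gᵀ C⁻¹ G` positive definite, and
an arbitrary `n × m` matrix `H`, the matrix `Hᵀ C H - Hᵀ G (Gᵀ C⁻¹ G)⁻¹ Gᵀ H` is
positive semidefinite. -/
theorem matrix_cauchy_schwarz_loewner
    (n k m : ℕ) (C : Matrix (Fin n) (Fin n) ℝ) (hC : C.PosDef)
    (G : Matrix (Fin n) (Fin k) ℝ) (hGCG : (Gᵀ * C⁻¹ * G).PosDef)
    (H : Matrix (Fin n) (Fin m) ℝ) :
    (Hᵀ * C * H - Hᵀ * G * (Gᵀ * C⁻¹ * G)⁻¹ * Gᵀ * H).PosSemidef := by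
  simp only [← conjTranspose_eq_transpose_of_trivial] at hGCG ⊢
  exact hC.posSemidef_sub_mul_inv_mul G hGCG H
end

section
/- Let $C$ be an $n \times n$ real symmetric positive definite matrix, let $G \in \mathbb{R}^{n \times k}$ be such that $G^{\top} C^{-1} G$ is positive definite, and let $W$ be an $n \times n$ real symmetric matrix such that $G^{\top} W G$ is invertible. Then $(G^{\top} W G)^{-1} G^{\top} W\, C\, W G (G^{\top} W G)^{-1} \;-\; (G^{\top} C^{-1} G)^{-1}$ is positive semidefinite. -/
open Matrix

/-!
The sandwich matrix is `B C Bᵀ` for the left inverse `B = (Gᵀ W G)⁻¹ Gᵀ W` of `G`.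
For any left inverse `B` of `G`, put `A = (Gᵀ C⁻¹ G)⁻¹ Gᵀ C⁻¹`: the three terms `B C Aᵀ`,
`A C Bᵀ` and `A C Aᵀ` all equal `(Gᵀ C⁻¹ G)⁻¹`, so
`B C Bᵀ - (Gᵀ C⁻¹ G)⁻¹ = (B - A) C (B - A)ᵀ`, which is positive semidefinite.
-/

namespace Matrix

variable {m n R K : Type*} [Fintype m] [DecidableEq m] [Fintype n]

section CommRing

variable [CommRing R] [StarRing R]

noncomputable def weightedLeftInverse (G : Matrix n m R) (W : Matrix n n R) : Matrix m n R :=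
  (Gᴴ * W * G)⁻¹ * Gᴴ * W

lemma weightedLeftInverse_mul_self {G : Matrix n m R} {W : Matrix n n R}
    (h : IsUnit (Gᴴ * W * G).det) : weightedLeftInverse G W * G = 1 := by
  rw [weightedLeftInverse, Matrix.mul_assoc, Matrix.mul_assoc, ← Matrix.mul_assoc Gᴴ,
    nonsing_inv_mul _ h]

lemma weightedLeftInverse_mul_mul_conjTranspose {G : Matrix n m R} {W : Matrix n n R}
    (hW : W.IsHermitian) (C : Matrix n n R) :
    weightedLeftInverse G W * C * (weightedLeftInverse G W)ᴴ =
      (Gᴴ * W * G)⁻¹ * (Gᴴ * W * C * W * G) * (Gᴴ * W * G)⁻¹ := by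
  have hT : (Gᴴ * W * G)⁻¹ᴴ = (Gᴴ * W * G)⁻¹ := (isHermitian_conjTranspose_mul_mul G hW).inv.eq
  simp only [weightedLeftInverse, conjTranspose_mul, conjTranspose_conjTranspose, hW.eq, hT]
  simp only [Matrix.mul_assoc]

variable [DecidableEq n]

lemma mul_mul_conjTranspose_sub_inv_eq {C : Matrix n n R} {G : Matrix n m R} {B : Matrix m n R}
    (hC : C.IsHermitian) (hCu : IsUnit C.det) (hS : IsUnit (Gᴴ * C⁻¹ * G).det) (hBG : B * G = 1) :
    B * C * Bᴴ - (Gᴴ * C⁻¹ * G)⁻¹ =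
      (B - (Gᴴ * C⁻¹ * G)⁻¹ * Gᴴ * C⁻¹) * C * (B - (Gᴴ * C⁻¹ * G)⁻¹ * Gᴴ * C⁻¹)ᴴ := by
  set S := Gᴴ * C⁻¹ * G
  set A := S⁻¹ * Gᴴ * C⁻¹
  have hSinv : S⁻¹.IsHermitian := (isHermitian_conjTranspose_mul_mul G hC.inv).inv
  have hAH : Aᴴ = C⁻¹ * G * S⁻¹ := by
    simp only [A, conjTranspose_mul, conjTranspose_conjTranspose, hC.inv.eq, hSinv.eq,
      Matrix.mul_assoc]
  have hCA : C * Aᴴ = G * S⁻¹ := by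
    rw [hAH, Matrix.mul_assoc, mul_nonsing_inv_cancel_left _ _ hCu]
  have hBA : B * C * Aᴴ = S⁻¹ := by
    rw [Matrix.mul_assoc, hCA, ← Matrix.mul_assoc, hBG, Matrix.one_mul]
  have hAB : A * C * Bᴴ = S⁻¹ := by
    rw [← hSinv.eq, ← hBA]
    simp only [conjTranspose_mul, conjTranspose_conjTranspose, hC.eq, Matrix.mul_assoc]
  have hAA : A * C * Aᴴ = S⁻¹ := by
    rw [Matrix.mul_assoc, hCA]
    calc A * (G * S⁻¹) = S⁻¹ * S * S⁻¹ := by simp only [A, S, Matrix.mul_assoc]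
      _ = S⁻¹ := by rw [nonsing_inv_mul _ hS, Matrix.one_mul]
  rw [conjTranspose_sub, Matrix.mul_sub, Matrix.sub_mul, Matrix.sub_mul, Matrix.sub_mul,
    hBA, hAB, hAA]
  abel

end CommRing

variable [DecidableEq n] [Field K] [PartialOrder K] [StarRing K]

theorem PosDef.posSemidef_mul_mul_conjTranspose_sub_inv {C : Matrix n n K} {G : Matrix n m K}
    {B : Matrix m n K} (hC : C.PosDef) (hS : IsUnit (Gᴴ * C⁻¹ * G)) (hBG : B * G = 1) :
    (B * C * Bᴴ - (Gᴴ * C⁻¹ * G)⁻¹).PosSemidef := by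
  rw [mul_mul_conjTranspose_sub_inv_eq hC.isHermitian ((isUnit_iff_isUnit_det C).mp hC.isUnit)
    ((isUnit_iff_isUnit_det _).mp hS) hBG]
  exact hC.posSemidef.mul_mul_conjTranspose_same _

end Matrix

/-- For a real symmetric positive definite `n × n` matrix `C`, an `n × k` matrix `G`
with `Gᵀ C⁻¹ G` positive definite, and a real symmetric `n × n` working weighting
matrix `W` with `Gᵀ W G` invertible, the sandwich variance dominates the optimally
weighted variance: `(Gᵀ W G)⁻¹ Gᵀ W C W G (Gᵀ W G)⁻¹ - (Gᵀ C⁻¹ G)⁻¹` is positive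
semidefinite. -/
theorem sandwich_variance_ge_optimal
    (n k : ℕ) (C : Matrix (Fin n) (Fin n) ℝ) (hC : C.PosDef)
    (G : Matrix (Fin n) (Fin k) ℝ) (hGCG : (Gᵀ * C⁻¹ * G).PosDef)
    (W : Matrix (Fin n) (Fin n) ℝ) (hW : W.IsSymm) (hGWG : IsUnit (Gᵀ * W * G)) :
    ((Gᵀ * W * G)⁻¹ * (Gᵀ * W * C * W * G) * (Gᵀ * W * G)⁻¹
      - (Gᵀ * C⁻¹ * G)⁻¹).PosSemidef := by
  have hWH : W.IsHermitian := hW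
  simp only [← conjTranspose_eq_transpose_of_trivial] at hGCG hGWG ⊢
  rw [← weightedLeftInverse_mul_mul_conjTranspose hWH]
  exact hC.posSemidef_mul_mul_conjTranspose_sub_inv hGCG.isUnit
    (weightedLeftInverse_mul_self ((isUnit_iff_isUnit_det _).mp hGWG))
end

section
/- Let $L \ge 1$ and $p \ge 1$, let $C$ be an $(Lp) \times (Lp)$ real symmetric positive definite matrix with leading principal $p \times p$ block $C_{11}$, and let $G \in \mathbb{R}^{(Lp) \times p}$ be a matrix whose first $p$ rows form an invertible matrix $G_1 \in \mathbb{R}^{p \times p}$. If $G^{\top} C^{-1} G$ is positive definite, then $G_1^{-1} C_{11} (G_1^{-1})^{\top} - (G^{\top} C^{-1} G)^{-1}$ is positive semidefinite. -/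
/-!
Gauss–Markov in matrix form. Every left inverse `M` of `G` defines an unbiased estimator with
variance `M C Mᵀ`, and the exactly identified estimator is the one with `M = G₁⁻¹ S`, where `S`
selects the rows indexed by `e`. The generalized least squares left inverse
`K = (Gᵀ C⁻¹ G)⁻¹ Gᵀ C⁻¹` satisfies `M C Kᵀ = (Gᵀ C⁻¹ G)⁻¹` for every left inverse `M`, so
`M C Mᵀ - (Gᵀ C⁻¹ G)⁻¹ = (M - K) C (M - K)ᵀ`, which is positive semidefinite.
-/

namespace Matrix

variable {n p α : Type*} [Fintype n]

theorem IsSymm.transpose_mul_mul [CommSemiring α] {A : Matrix n n α} (hA : A.IsSymm)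
    (B : Matrix n p α) : (Bᵀ * A * B).IsSymm := by
  rw [IsSymm, transpose_mul, transpose_mul, hA.eq, transpose_transpose, Matrix.mul_assoc]

variable [DecidableEq n]

lemma one_submatrix_mul_mul_transpose {m : Type*} [Semiring α] (e : m → n) (A : Matrix n n α) :
    (1 : Matrix n n α).submatrix e id * A * ((1 : Matrix n n α).submatrix e id)ᵀ =
      A.submatrix e e := by
  rw [transpose_submatrix, transpose_one, ← Equiv.coe_refl, one_submatrix_mul e (Equiv.refl n),
    mul_submatrix_one (Equiv.refl n)]
  rfl

variable [Fintype p] [DecidableEq p]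

noncomputable def glsLeftInverse [CommRing α] (C : Matrix n n α) (G : Matrix n p α) :
    Matrix p n α :=
  (Gᵀ * C⁻¹ * G)⁻¹ * (Gᵀ * C⁻¹)

section CommRing

variable [CommRing α] {C : Matrix n n α} {G : Matrix n p α}

lemma glsLeftInverse_mul (hH : IsUnit (Gᵀ * C⁻¹ * G)) : glsLeftInverse C G * G = 1 := by
  rw [glsLeftInverse, Matrix.mul_assoc, nonsing_inv_mul _ ((isUnit_iff_isUnit_det _).mp hH)]

lemma mul_mul_transpose_glsLeftInverse (hC : C.IsSymm) (hCu : IsUnit C) {M : Matrix p n α}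
    (hM : M * G = 1) : M * C * (glsLeftInverse C G)ᵀ = (Gᵀ * C⁻¹ * G)⁻¹ := by
  calc M * C * (glsLeftInverse C G)ᵀ = M * (C * C⁻¹) * G * (Gᵀ * C⁻¹ * G)⁻¹ := by
        rw [glsLeftInverse, transpose_mul, (hC.inv.transpose_mul_mul G).inv.eq, transpose_mul,
          hC.inv.eq, transpose_transpose]
        simp only [Matrix.mul_assoc]
    _ = (Gᵀ * C⁻¹ * G)⁻¹ := by
        rw [mul_nonsing_inv _ ((isUnit_iff_isUnit_det _).mp hCu), Matrix.mul_one, hM,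
          Matrix.one_mul]

end CommRing

lemma posSemidef_mul_mul_transpose_sub_inv {C : Matrix n n ℝ} {G : Matrix n p ℝ}
    (hC : C.PosDef) (hH : IsUnit (Gᵀ * C⁻¹ * G)) {M : Matrix p n ℝ} (hM : M * G = 1) :
    (M * C * Mᵀ - (Gᵀ * C⁻¹ * G)⁻¹).PosSemidef := by
  have hCsymm : C.IsSymm := hC.isHermitian
  have hMK := mul_mul_transpose_glsLeftInverse hCsymm hC.isUnit hM
  have hKK := mul_mul_transpose_glsLeftInverse hCsymm hC.isUnit (glsLeftInverse_mul hH)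
  have hKM : glsLeftInverse C G * C * Mᵀ = (Gᵀ * C⁻¹ * G)⁻¹ := by
    rw [← (hCsymm.inv.transpose_mul_mul G).inv.eq, ← hMK, transpose_mul, transpose_mul,
      transpose_transpose, hCsymm.eq, Matrix.mul_assoc]
  set K := glsLeftInverse C G
  have hsplit : M * C * Mᵀ - (Gᵀ * C⁻¹ * G)⁻¹ = (M - K) * C * (M - K)ᴴ := by
    simp only [conjTranspose_eq_transpose_of_trivial, transpose_sub, Matrix.sub_mul,
      Matrix.mul_sub, hMK, hKM, hKK]
    abel
  rw [hsplit]
  exact hC.posSemidef.mul_mul_conjTranspose_same _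

end Matrix

open Matrix

theorem qif_never_less_efficient_than_single_basis_general
    (L p : ℕ)
    (C : Matrix (Fin L × Fin p) (Fin L × Fin p) ℝ) (hC : C.PosDef)
    (e : Fin p → Fin L × Fin p)
    (C₁₁ : Matrix (Fin p) (Fin p) ℝ) (hC₁₁ : C₁₁ = C.submatrix e e)
    (G : Matrix (Fin L × Fin p) (Fin p) ℝ)
    (G₁ : Matrix (Fin p) (Fin p) ℝ) (hG₁ : G₁ = G.submatrix e id)
    (hG₁inv : IsUnit G₁)
    (hGCG : (Gᵀ * C⁻¹ * G).PosDef) :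
    (G₁⁻¹ * C₁₁ * (G₁⁻¹)ᵀ - (Gᵀ * C⁻¹ * G)⁻¹).PosSemidef := by
  let S := (1 : Matrix (Fin L × Fin p) (Fin L × Fin p) ℝ).submatrix e id
  have hSG : S * G = G₁ := hG₁ ▸ one_submatrix_mul e (Equiv.refl _) G
  have hM : G₁⁻¹ * S * G = 1 := by
    rw [Matrix.mul_assoc, hSG, nonsing_inv_mul _ ((isUnit_iff_isUnit_det _).mp hG₁inv)]
  have hMCM : G₁⁻¹ * S * C * (G₁⁻¹ * S)ᵀ = G₁⁻¹ * C₁₁ * G₁⁻¹ᵀ := by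
    rw [transpose_mul, hC₁₁, ← one_submatrix_mul_mul_transpose]
    simp only [S, Matrix.mul_assoc]
  simpa only [hMCM] using posSemidef_mul_mul_transpose_sub_inv hC hGCG.isUnit hM

/-- QIF never reduces efficiency relative to a single working correlation structure:
if `C` is a symmetric positive definite `(Lp) × (Lp)` matrix (indexed by blocks,
with leading principal `p × p` block `C₁₁`), `G` is an `(Lp) × p` matrix whose first
`p` rows form an invertible matrix `G₁`, and `Gᵀ C⁻¹ G` is positive definite, then
`G₁⁻¹ C₁₁ (G₁⁻¹)ᵀ - (Gᵀ C⁻¹ G)⁻¹` is positive semidefinite. -/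
theorem qif_never_less_efficient_than_single_basis
    (L p : ℕ) (hL : 1 ≤ L) (hp : 1 ≤ p)
    (C : Matrix (Fin L × Fin p) (Fin L × Fin p) ℝ) (hC : C.PosDef)
    (e : Fin p → Fin L × Fin p) (he : e = fun i => (⟨0, hL⟩, i))
    (C₁₁ : Matrix (Fin p) (Fin p) ℝ) (hC₁₁ : C₁₁ = C.submatrix e e)
    (G : Matrix (Fin L × Fin p) (Fin p) ℝ)
    (G₁ : Matrix (Fin p) (Fin p) ℝ) (hG₁ : G₁ = G.submatrix e id)
    (hG₁inv : IsUnit G₁)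
    (hGCG : (Gᵀ * C⁻¹ * G).PosDef) :
    (G₁⁻¹ * C₁₁ * (G₁⁻¹)ᵀ - (Gᵀ * C⁻¹ * G)⁻¹).PosSemidef :=
  qif_never_less_efficient_than_single_basis_general L p C hC e C₁₁ hC₁₁ G G₁ hG₁ hG₁inv hGCG
end

section
/- Let $(\Omega, \mathcal{F}, P)$ be a probability space, let $n \ge 1$, let $Y_1, \dots, Y_n$ be integrable real random variables with $E[Y_k] = E[Y_1]$ for all $k$, and let $S = (S_1, \dots, S_n) : \Omega \to \{0,1\}^n$ be a random vector independent of the random vector $(Y_1, \dots, Y_n)$. Then $E\left[ \mathbf{1}\Big\{\sum_{k=1}^n S_k \ge 1\Big\} \cdot \frac{\sum_{k=1}^n S_k Y_k}{\sum_{k=1}^n S_k} \right] = E[Y_1] \cdot P\Big(\sum_{k=1}^n S_k \ge 1\Big).$ -/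
open MeasureTheory ProbabilityTheory

/-!
On `{∑ S ≥ 1}` the observed average is `∑ₖ wₖ(S) Yₖ` with weights `wₖ(S) = Sₖ / ∑ S`, which are
bounded by `1` and sum to the indicator of `{∑ S ≥ 1}`. Independence factors
`E[wₖ(S) Yₖ] = E[wₖ(S)] E[Yₖ] = E[wₖ(S)] E[Y₁]`, and summing over `k` gives `E[Y₁] P(∑ S ≥ 1)`.
-/

section WeightedSum

variable {Ω β ι : Type*} [MeasurableSpace Ω] [MeasurableSpace β] [Fintype ι]
  {μ : Measure Ω} [IsFiniteMeasure μ]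

theorem integral_sum_weight_mul_of_indepFun {S : Ω → β} {Y : ι → Ω → ℝ} {m C : ℝ}
    (hindep : IndepFun S (fun ω k => Y k ω) μ) (hS : Measurable S)
    (hYint : ∀ k, Integrable (Y k) μ) (hYmean : ∀ k, ∫ ω, Y k ω ∂μ = m)
    {w : ι → β → ℝ} (hw : ∀ k, Measurable (w k)) (hwbdd : ∀ k ω, ‖w k (S ω)‖ ≤ C) :
    ∫ ω, ∑ k, w k (S ω) * Y k ω ∂μ = m * ∫ ω, ∑ k, w k (S ω) ∂μ := by
  have hwS : ∀ k, AEStronglyMeasurable (fun ω => w k (S ω)) μ :=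
    fun k => ((hw k).comp hS).aestronglyMeasurable
  have hwSint : ∀ k, Integrable (fun ω => w k (S ω)) μ :=
    fun k => .of_bound (hwS k) C (ae_of_all _ (hwbdd k))
  have hterm : ∀ k, ∫ ω, w k (S ω) * Y k ω ∂μ = (∫ ω, w k (S ω) ∂μ) * m := fun k => by
    rw [← hYmean k]
    exact (hindep.comp (hw k) (measurable_pi_apply k)).integral_fun_mul_eq_mul_integral
      (hwS k) (hYint k).aestronglyMeasurable
  rw [integral_finsetSum _ fun k _ => (hYint k).bdd_mul (hwS k) (ae_of_all _ (hwbdd k)),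
    integral_finsetSum _ fun k _ => hwSint k, Finset.mul_sum]
  exact Finset.sum_congr rfl fun k _ => (hterm k).trans (mul_comm _ _)

end WeightedSum

section ObservedWeight

variable {ι : Type*} [Fintype ι]

noncomputable def observedWeight (k : ι) (s : ι → ℝ) : ℝ :=
  {s : ι → ℝ | 1 ≤ ∑ i, s i}.indicator (fun s => s k / ∑ i, s i) s

theorem measurableSet_one_le_sum : MeasurableSet {s : ι → ℝ | 1 ≤ ∑ i, s i} :=
  measurableSet_le measurable_const (Finset.measurable_sum _ fun i _ => measurable_pi_apply i)

theorem measurable_observedWeight (k : ι) : Measurable (observedWeight k) :=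
  ((measurable_pi_apply k).div (Finset.measurable_sum _ fun i _ => measurable_pi_apply i)).indicator
    measurableSet_one_le_sum

theorem norm_observedWeight_le_one {s : ι → ℝ} (hs : ∀ i, 0 ≤ s i) (k : ι) :
    ‖observedWeight k s‖ ≤ 1 := by
  unfold observedWeight
  by_cases h : s ∈ {s : ι → ℝ | 1 ≤ ∑ i, s i}
  · have hsum : 0 < ∑ i, s i := zero_lt_one.trans_le h
    rw [Set.indicator_of_mem h, Real.norm_eq_abs, abs_div, abs_of_nonneg (hs k),
      abs_of_pos hsum]
    exact div_le_one_of_le₀ (Finset.single_le_sum (fun i _ => hs i) (Finset.mem_univ k))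
      hsum.le
  · simp [Set.indicator_of_notMem h]

theorem sum_observedWeight (s : ι → ℝ) :
    ∑ k, observedWeight k s = {s : ι → ℝ | 1 ≤ ∑ i, s i}.indicator 1 s := by
  unfold observedWeight
  by_cases h : s ∈ {s : ι → ℝ | 1 ≤ ∑ i, s i}
  · simp only [Set.indicator_of_mem h, Pi.one_apply, ← Finset.sum_div]
    exact div_self (zero_lt_one.trans_le h).ne'
  · simp [Set.indicator_of_notMem h]

theorem indicator_mul_div_sum_eq_sum_observedWeight_mul (s y : ι → ℝ) :
    {s : ι → ℝ | 1 ≤ ∑ i, s i}.indicator (fun _ => (1 : ℝ)) s * ((∑ k, s k * y k) / ∑ k, s k)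
      = ∑ k, observedWeight k s * y k := by
  unfold observedWeight
  by_cases h : s ∈ {s : ι → ℝ | 1 ≤ ∑ i, s i}
  · simp only [Set.indicator_of_mem h, one_mul, Finset.sum_div]
    exact Finset.sum_congr rfl fun k _ => (div_mul_eq_mul_div _ _ _).symm
  · simp [Set.indicator_of_notMem h]

end ObservedWeight

/-- Unbiasedness of the observed within-cluster average under non-informative sampling:
if the enrollment indicators `S = (S 1, …, S n)` (each valued in `{0,1}`) are jointly
independent of the outcomes `(Y 1, …, Y n)`, and all outcomes share the mean of `Y 1`,
then `E[ 1{∑ S k ≥ 1} · (∑ S k · Y k) / (∑ S k) ] = E[Y 1] · P(∑ S k ≥ 1)`. -/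
theorem observed_cluster_average_unbiased
    {Ω : Type*} [MeasurableSpace Ω] (μ : Measure Ω) [IsProbabilityMeasure μ]
    (n : ℕ) (hn : 0 < n)
    (Y : Fin n → Ω → ℝ) (hYint : ∀ k, Integrable (Y k) μ)
    (hYmean : ∀ k, ∫ ω, Y k ω ∂μ = ∫ ω, Y ⟨0, hn⟩ ω ∂μ)
    (S : Fin n → Ω → ℝ) (hSmeas : ∀ k, Measurable (S k))
    (hS01 : ∀ k ω, S k ω = 0 ∨ S k ω = 1)
    (hindep : IndepFun (fun ω => fun k => S k ω) (fun ω => fun k => Y k ω) μ) :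
    ∫ ω, ({ω' | 1 ≤ ∑ k, S k ω'}.indicator (fun _ => (1 : ℝ)) ω)
        * ((∑ k, S k ω * Y k ω) / (∑ k, S k ω)) ∂μ
      = (∫ ω, Y ⟨0, hn⟩ ω ∂μ) * (μ {ω' | 1 ≤ ∑ k, S k ω'}).toReal := by
  have hS_nonneg : ∀ ω k, 0 ≤ S k ω := fun ω k => by rcases hS01 k ω with h | h <;> simp [h]
  have hS : Measurable fun ω k => S k ω := measurable_pi_lambda _ hSmeas
  calc _ = ∫ ω, ∑ k, observedWeight k (fun i => S i ω) * Y k ω ∂μ :=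
        integral_congr_ae (ae_of_all _ fun ω =>
          indicator_mul_div_sum_eq_sum_observedWeight_mul (fun i => S i ω) (fun i => Y i ω))
    _ = (∫ ω, Y ⟨0, hn⟩ ω ∂μ) * ∫ ω, ∑ k, observedWeight k (fun i => S i ω) ∂μ :=
        integral_sum_weight_mul_of_indepFun hindep hS hYint hYmean measurable_observedWeight
          fun k ω => norm_observedWeight_le_one (hS_nonneg ω) k
    _ = _ := by
        simp_rw [sum_observedWeight]
        change _ * ∫ ω, {ω' | 1 ≤ ∑ k, S k ω'}.indicator 1 ω ∂μ = _
        rw [integral_indicator_one (s := {ω' | 1 ≤ ∑ k, S k ω'})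
          (measurableSet_one_le_sum.preimage hS), measureReal_def]
end

section
/- Let $(\Omega, \mathcal{F}, P)$ be a probability space, $J \ge 1$, $Z : \Omega \to \{1, \dots, J\}$ measurable, and for each period $j \in \{1, \dots, J\}$ and each $z \in \{0, 1, \dots, j\}$ let $W_{j,z}$ be an integrable real random variable (the potential outcome at period $j$ under treatment start $z$, with $z = 0$ denoting never-yet-treated). Let $V$ be an integrable real random variable (a function of baseline covariates), and assume $Z$ is independent of the random vector consisting of all $W_{j,z}$ and $V$. Define the observed outcome $Y_j(\omega) = W_{j, Z(\omega)}(\omega)$ if $Z(\omega) \le j$ and $Y_j(\omega) = W_{j,0}(\omega)$ otherwise, and let $p_j = P(Z \le j)$. Assume the constant-treatment-effect model: there is $\Delta \in \mathbb{R}$ with $E[W_{j,z}] = E[W_{j,0}] + \Delta$ for every $j$ and every $1 \le z \le j$, and assume $\sum_{j=1}^J p_j (1 - p_j) > 0$. Then the unique $\beta \in \mathbb{R}$ satisfying $\sum_{j=1}^{J} E\big[ (\mathbf{1}\{Z \le j\} - p_j) \big( Y_j - (\mathbf{1}\{Z \le j\} - p_j)\beta - V \big) \big] = 0$ is $\beta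 = \Delta$. -/
/-!
For a fixed period `j`, put `D = 1{Z ≤ j}` and write the observed outcome as `W j (s Z)` with
`s z = z` for `z ≤ j` and `s z = 0` otherwise. The integrand of the `j`-th normal-equation term
is then `G (Z ω) ω` for a family `G z` of functions of `(W, V)`, hence independent of `Z`, so its
expectation is `∑ z, P(Z = z) E[G z]`. The constant effect gives
`E[W j (s z)] = E[W j 0] + 1{z ≤ j} Δ`, and the centring of `D` by `p j` cancels the contributions
of `E[W j 0]` and `E[V]`, leaving `p j (1 - p j) (Δ - β)`. Summing over `j`,
the equation reads `(∑ j, p j (1 - p j)) (Δ - β) = 0`.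
-/

open MeasureTheory ProbabilityTheory

section

variable {Ω ι : Type*} [MeasurableSpace Ω] {μ : Measure Ω} [MeasurableSpace ι] {Z : Ω → ι}

theorem setIntegral_preimage_eq_mul_of_indepFun (hZ : Measurable Z) {t : Set ι}
    (ht : MeasurableSet t) {g : Ω → ℝ} (hg : AEStronglyMeasurable g μ) (hind : IndepFun Z g μ) :
    ∫ ω in Z ⁻¹' t, g ω ∂μ = μ.real (Z ⁻¹' t) * ∫ ω, g ω ∂μ := by
  have hindicator : (Z ⁻¹' t).indicator g = fun ω => t.indicator 1 (Z ω) * g ω := by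
    ext ω
    by_cases hω : Z ω ∈ t <;> simp [hω]
  have hprod :=
    (hind.comp (measurable_one.indicator ht) measurable_id).integral_fun_mul_eq_mul_integral
      ((measurable_one.indicator ht).comp hZ).aestronglyMeasurable hg
  simp only [Function.comp_def, id] at hprod
  rw [← integral_indicator (hZ ht), hindicator, hprod, ← integral_indicator_one (hZ ht)]
  rfl

theorem integral_comp_eq_sum_of_indepFun [MeasurableSingletonClass ι] (hZ : Measurable Z)
    {S : Finset ι} (hZS : ∀ ω, Z ω ∈ S) {G : ι → Ω → ℝ} (hG : ∀ z ∈ S, Integrable (G z) μ)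
    (hind : ∀ z ∈ S, IndepFun Z (G z) μ) :
    ∫ ω, G (Z ω) ω ∂μ = ∑ z ∈ S, μ.real (Z ⁻¹' {z}) * ∫ ω, G z ω ∂μ := by
  have hsplit : (fun ω => G (Z ω) ω) = fun ω => ∑ z ∈ S, (Z ⁻¹' {z}).indicator (G z) ω := by
    ext ω
    rw [Finset.sum_eq_single_of_mem (Z ω) (hZS ω) fun z _ hz => by simp [Ne.symm hz]]
    simp
  rw [hsplit,
    integral_finsetSum _ fun z hz => (hG z hz).indicator (hZ (measurableSet_singleton z))]
  refine Finset.sum_congr rfl fun z hz => ?_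
  rw [integral_indicator (hZ (measurableSet_singleton z))]
  exact setIntegral_preimage_eq_mul_of_indepFun hZ (measurableSet_singleton z)
    (hG z hz).aestronglyMeasurable (hind z hz)

variable [IsProbabilityMeasure μ]

theorem sum_measureReal_preimage_singleton_mul_ite {Z : Ω → ℕ} (hZ : Measurable Z)
    {S : Finset ℕ} (hZS : ∀ ω, Z ω ∈ S) (j : ℕ) (a b : ℝ) :
    ∑ z ∈ S, μ.real (Z ⁻¹' {z}) * ((if z ≤ j then (1 : ℝ) else 0) * a + b)
      = μ.real {ω | Z ω ≤ j} * a + b := by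
  have hfib : ∀ s : Finset ℕ, ∑ z ∈ s, μ.real (Z ⁻¹' {z}) = μ.real (Z ⁻¹' s) := fun s =>
    sum_measureReal_preimage_singleton s fun z _ => hZ (measurableSet_singleton z)
  have htotal : ∑ z ∈ S, μ.real (Z ⁻¹' {z}) = 1 := by
    rw [hfib, Set.preimage_eq_univ_iff.mpr fun _ ⟨ω, hω⟩ => hω ▸ hZS ω, probReal_univ]
  have htreated : ∑ z ∈ S, μ.real (Z ⁻¹' {z}) * (if z ≤ j then (1 : ℝ) else 0)
      = μ.real {ω | Z ω ≤ j} := by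
    simp only [mul_ite, mul_one, mul_zero, ← Finset.sum_filter, hfib]
    congr 1
    ext ω
    simp [hZS ω]
  simp only [mul_add, Finset.sum_add_distrib, ← Finset.sum_mul, ← mul_assoc, htreated, htotal,
    one_mul]

theorem integral_centered_treatment_mul_residual {Z : Ω → ℕ} (hZ : Measurable Z) {J j : ℕ}
    (hZrange : ∀ ω, 1 ≤ Z ω ∧ Z ω ≤ J) {W : ℕ → Ω → ℝ} (hW : ∀ z ≤ j, Integrable (W z) μ)
    {V : Ω → ℝ} (hV : Integrable V μ) (hindep : ∀ z, IndepFun Z (fun ω => (W z ω, V ω)) μ)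
    {Δ : ℝ} (hΔ : ∀ z, 1 ≤ z → z ≤ j → ∫ ω, W z ω ∂μ = ∫ ω, W 0 ω ∂μ + Δ)
    {p : ℝ} (hp : p = μ.real {ω | Z ω ≤ j}) (β : ℝ) :
    ∫ ω, ((if Z ω ≤ j then (1 : ℝ) else 0) - p)
        * ((if Z ω ≤ j then W (Z ω) ω else W 0 ω)
          - ((if Z ω ≤ j then (1 : ℝ) else 0) - p) * β - V ω) ∂μ
      = p * (1 - p) * (Δ - β) := by
  set I : ℕ → ℝ := fun z => if z ≤ j then 1 else 0
  set start : ℕ → ℕ := fun z => if z ≤ j then z else 0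
  set G : ℕ → Ω → ℝ := fun z ω => (I z - p) * (W (start z) ω - (I z - p) * β - V ω)
  have hstart : ∀ z, start z ≤ j := fun z => by by_cases hz : z ≤ j <;> simp [start, hz]
  have hobserved : ∀ ω, (if Z ω ≤ j then W (Z ω) ω else W 0 ω) = W (start (Z ω)) ω :=
    fun ω => by by_cases hz : Z ω ≤ j <;> simp [start, hz]
  have hGint : ∀ z, Integrable (G z) μ := fun z =>
    (((hW _ (hstart z)).sub (integrable_const _)).sub hV).const_mul _
  have hGindep : ∀ z, IndepFun Z (G z) μ := fun z =>
    (hindep (start z)).comp measurable_id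
      (ψ := fun x : ℝ × ℝ => (I z - p) * (x.1 - (I z - p) * β - x.2)) (by fun_prop)
  have hGmean : ∀ z ∈ Finset.Icc 1 J, ∫ ω, G z ω ∂μ
      = I z * ((∫ ω, W 0 ω ∂μ - ∫ ω, V ω ∂μ) + (1 - p) * Δ - (1 - 2 * p) * β)
        + -(p * (∫ ω, W 0 ω ∂μ - ∫ ω, V ω ∂μ + p * β)) := by
    intro z hz
    have hstartmean : ∫ ω, W (start z) ω ∂μ = ∫ ω, W 0 ω ∂μ + I z * Δ := by
      by_cases hzj : z ≤ j
      · simp [start, I, hzj, hΔ z (Finset.mem_Icc.mp hz).1 hzj]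
      · simp [start, I, hzj]
    simp only [G, integral_const_mul]
    rw [integral_sub (f := fun ω => W (start z) ω - (I z - p) * β)
        ((hW _ (hstart z)).sub (integrable_const _)) hV,
      integral_sub (hW _ (hstart z)) (integrable_const _), integral_const, probReal_univ,
      smul_eq_mul, hstartmean]
    by_cases hzj : z ≤ j <;> simp only [I, hzj, if_true, if_false] <;> ring
  simp only [hobserved]
  have hZS : ∀ ω, Z ω ∈ Finset.Icc 1 J := fun ω => Finset.mem_Icc.mpr (hZrange ω)
  rw [integral_comp_eq_sum_of_indepFun (G := G) hZ hZS (fun z _ => hGint z)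
      (fun z _ => hGindep z),
    Finset.sum_congr rfl fun z hz => by rw [hGmean z hz],
    sum_measureReal_preimage_singleton_mul_ite hZ hZS, ← hp]
  ring

end

theorem constant_effect_population_consistency_general
    {Ω : Type*} [MeasurableSpace Ω] (μ : Measure Ω) [IsProbabilityMeasure μ]
    (J : ℕ)
    (Z : Ω → ℕ) (hZ : Measurable Z) (hZrange : ∀ ω, 1 ≤ Z ω ∧ Z ω ≤ J)
    (W : ℕ → ℕ → Ω → ℝ)
    (hWint : ∀ j, 1 ≤ j → j ≤ J → ∀ z, z ≤ j → Integrable (W j z) μ)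
    (V : Ω → ℝ) (hVint : Integrable V μ)
    (hindep : IndepFun Z (fun ω => ((fun jz : ℕ × ℕ => W jz.1 jz.2 ω), V ω)) μ)
    (Y : ℕ → Ω → ℝ)
    (hY : ∀ j ω, Y j ω = if Z ω ≤ j then W j (Z ω) ω else W j 0 ω)
    (p : ℕ → ℝ) (hp : ∀ j, p j = (μ {ω | Z ω ≤ j}).toReal)
    (Δ : ℝ)
    (hΔ : ∀ j, 1 ≤ j → j ≤ J → ∀ z, 1 ≤ z → z ≤ j →
      ∫ ω, W j z ω ∂μ = (∫ ω, W j 0 ω ∂μ) + Δ)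
    (hpos : 0 < ∑ j ∈ Finset.Icc 1 J, p j * (1 - p j)) :
    ∀ β : ℝ,
      (∑ j ∈ Finset.Icc 1 J,
        ∫ ω, ((if Z ω ≤ j then (1 : ℝ) else 0) - p j)
          * (Y j ω - ((if Z ω ≤ j then (1 : ℝ) else 0) - p j) * β - V ω) ∂μ) = 0
      ↔ β = Δ := by
  intro β
  have hterm : ∀ j ∈ Finset.Icc 1 J,
      ∫ ω, ((if Z ω ≤ j then (1 : ℝ) else 0) - p j)
          * (Y j ω - ((if Z ω ≤ j then (1 : ℝ) else 0) - p j) * β - V ω) ∂μ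
        = p j * (1 - p j) * (Δ - β) := by
    intro j hj
    obtain ⟨hj1, hjJ⟩ := Finset.mem_Icc.mp hj
    simp only [hY]
    exact integral_centered_treatment_mul_residual hZ hZrange (hWint j hj1 hjJ) hVint
      (fun z => hindep.comp measurable_id
        (ψ := fun x : (ℕ × ℕ → ℝ) × ℝ => (x.1 (j, z), x.2)) (by fun_prop))
      (hΔ j hj1 hjJ) (hp j) β
  rw [Finset.sum_congr rfl hterm, ← Finset.sum_mul, mul_eq_zero, sub_eq_zero]
  simp [hpos.ne', eq_comm]

/-- Population-level consistency of the proposed estimator under the constant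
treatment-effect model in a stepped-wedge design: with randomized treatment-start
period `Z` taking values in `{1, …, J}`, potential outcomes `W j z` (with `z = 0`
denoting not yet treated), an arbitrary integrable covariate-adjustment term `V`
independent (jointly with the potential outcomes) of `Z`, observed outcome
`Y j = W j Z` if `Z ≤ j` and `W j 0` otherwise, marginal probabilities
`p j = P(Z ≤ j)` with `∑_j p j (1 - p j) > 0`, and a constant treatment effect `Δ`
(`E[W j z] = E[W j 0] + Δ` for all `1 ≤ z ≤ j ≤ J`), the unique root `β` of the
population normal equation
`∑_{j=1}^J E[(1{Z≤j} - p j)(Y j - (1{Z≤j} - p j) β - V)] = 0` is `β = Δ`. -/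
theorem constant_effect_population_consistency
    {Ω : Type*} [MeasurableSpace Ω] (μ : Measure Ω) [IsProbabilityMeasure μ]
    (J : ℕ) (hJ : 1 ≤ J)
    (Z : Ω → ℕ) (hZ : Measurable Z) (hZrange : ∀ ω, 1 ≤ Z ω ∧ Z ω ≤ J)
    (W : ℕ → ℕ → Ω → ℝ)
    (hWint : ∀ j, 1 ≤ j → j ≤ J → ∀ z, z ≤ j → Integrable (W j z) μ)
    (V : Ω → ℝ) (hVint : Integrable V μ)
    (hindep : IndepFun Z (fun ω => ((fun jz : ℕ × ℕ => W jz.1 jz.2 ω), V ω)) μ)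
    (Y : ℕ → Ω → ℝ)
    (hY : ∀ j ω, Y j ω = if Z ω ≤ j then W j (Z ω) ω else W j 0 ω)
    (p : ℕ → ℝ) (hp : ∀ j, p j = (μ {ω | Z ω ≤ j}).toReal)
    (Δ : ℝ)
    (hΔ : ∀ j, 1 ≤ j → j ≤ J → ∀ z, 1 ≤ z → z ≤ j →
      ∫ ω, W j z ω ∂μ = (∫ ω, W j 0 ω ∂μ) + Δ)
    (hpos : 0 < ∑ j ∈ Finset.Icc 1 J, p j * (1 - p j)) :
    ∀ β : ℝ,
      (∑ j ∈ Finset.Icc 1 J,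
        ∫ ω, ((if Z ω ≤ j then (1 : ℝ) else 0) - p j)
          * (Y j ω - ((if Z ω ≤ j then (1 : ℝ) else 0) - p j) * β - V ω) ∂μ) = 0
      ↔ β = Δ :=
  constant_effect_population_consistency_general μ J Z hZ hZrange W hWint V hVint hindep Y hY p hp Δ
    hΔ hpos
end

section
/- Let $(\Omega, \mathcal{F}, P)$ be a probability space, $J \ge 1$, $Z : \Omega \to \{1, \dots, J\}$ measurable, and for each period $j \in \{1, \dots, J\}$ and each $z \in \{0, 1, \dots, j\}$ let $W_{j,z}$ be an integrable real random variable. Let $V$ be an integrable real random variable, and assume $Z$ is independent of the random vector consisting of all $W_{j,z}$ and $V$. Define the observed outcome $Y_j(\omega) = W_{j, Z(\omega)}(\omega)$ if $Z(\omega) \le j$ and $Y_j(\omega) = W_{j,0}(\omega)$ otherwise, and let $p_j = P(Z \le j)$. Assume the period-specific treatment-effect model: there are $\Delta_1, \dots, \Delta_J \in \mathbb{R}$ with $E[W_{j,z}] = E[W_{j,0}] + \Delta_j$ for every $j$ and every $1 \le z \le j$. Then for each $j$, $E\big[ (\mathbf{1}\{Z \le j\} - p_j) (Y_j - V) \big]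 = p_j (1 - p_j)\, \Delta_j$. -/
/-!
Because `Z` is independent of the potential outcomes and of `V`, the expectation of
`(1{Z ≤ j} - p) (Y_j - V)` is obtained by freezing `Z = z`, averaging over the outcomes and then
averaging over `z`. Writing `m = E[W_{j,0}] - E[V]`, the frozen mean is
`(1{z ≤ j} - p) (m + 1{z ≤ j} Δ_j)`. Its `m`-part averages to `m E[1{Z ≤ j} - p] = 0`, whatever
`V` is, and its `Δ`-part to `Δ_j E[(1{Z ≤ j} - p) 1{Z ≤ j}] = p (1 - p) Δ_j`.
-/
open MeasureTheory ProbabilityTheory Finset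

section RandomIndex

variable {Ω ι : Type*} [MeasurableSpace Ω] [MeasurableSpace ι] [MeasurableSingletonClass ι]
  {μ : Measure Ω} {Z : Ω → ι}

theorem MeasureTheory.sum_filter_measureReal_preimage_singleton [IsFiniteMeasure μ]
    (hZ : Measurable Z) {s : Finset ι} (hZs : ∀ ω, Z ω ∈ s) (P : ι → Prop) [DecidablePred P] :
    ∑ z ∈ s with P z, μ.real (Z ⁻¹' {z}) = μ.real {ω | P (Z ω)} := by
  rw [sum_measureReal_preimage_singleton _ fun z _ => hZ (measurableSet_singleton z)]
  congr 1
  ext ω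
  simp [hZs ω]

variable {β : Type*} [MeasurableSpace β] {X : Ω → β}

theorem ProbabilityTheory.IndepFun.setIntegral_preimage_singleton (hZX : IndepFun Z X μ)
    (hZ : Measurable Z) {f : β → ℝ} (hf : Measurable f)
    (hfX : AEStronglyMeasurable (fun ω => f (X ω)) μ) (z : ι) :
    ∫ ω in Z ⁻¹' {z}, f (X ω) ∂μ = μ.real (Z ⁻¹' {z}) * ∫ ω, f (X ω) ∂μ := by
  set g : ι → ℝ := ({z} : Set ι).indicator 1
  have hg_meas : Measurable g := measurable_one.indicator (measurableSet_singleton z)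
  have hZz : MeasurableSet (Z ⁻¹' {z}) := hZ (measurableSet_singleton z)
  have hg : (Z ⁻¹' {z}).indicator 1 = g ∘ Z := rfl
  have hgf : (Z ⁻¹' {z}).indicator (fun ω => f (X ω)) = (g ∘ Z) * (f ∘ X) := by
    funext ω; by_cases h : Z ω = z <;> simp [g, h]
  rw [← integral_indicator hZz, ← integral_indicator_one hZz, hgf, hg]
  exact (hZX.comp hg_meas hf).integral_mul_eq_mul_integral
    (hg_meas.comp hZ).aestronglyMeasurable hfX

theorem ProbabilityTheory.IndepFun.integral_comp_eq_sum (hZX : IndepFun Z X μ)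
    (hZ : Measurable Z) {s : Finset ι} (hZs : ∀ ω, Z ω ∈ s) {F : ι → β → ℝ}
    (hF : ∀ z ∈ s, Measurable (F z))
    (hFX : ∀ z ∈ s, Integrable (fun ω => F z (X ω)) μ) :
    ∫ ω, F (Z ω) (X ω) ∂μ = ∑ z ∈ s, μ.real (Z ⁻¹' {z}) * ∫ ω, F z (X ω) ∂μ := by
  have hZz (z : ι) : MeasurableSet (Z ⁻¹' {z}) := hZ (measurableSet_singleton z)
  have hsplit : (fun ω => F (Z ω) (X ω))
      = fun ω => ∑ z ∈ s, (Z ⁻¹' {z}).indicator (fun ω => F z (X ω)) ω := by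
    funext ω
    rw [sum_eq_single_of_mem (Z ω) (hZs ω) fun z _ hz => by simp [Ne.symm hz]]
    simp
  rw [hsplit, integral_finsetSum _ fun z hz => (hFX z hz).indicator (hZz z)]
  refine sum_congr rfl fun z hz => ?_
  rw [integral_indicator (hZz z)]
  exact hZX.setIntegral_preimage_singleton hZ (hF z hz) (hFX z hz).aestronglyMeasurable z

end RandomIndex

theorem sum_mul_centered_indicator {ι : Type*} {s : Finset ι} (q : ι → ℝ) (P : ι → Prop)
    [DecidablePred P] {p : ℝ} (m Δ : ℝ) (hq : ∑ z ∈ s, q z = 1)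
    (hqP : ∑ z ∈ s with P z, q z = p) :
    ∑ z ∈ s, q z * (((if P z then 1 else 0) - p) * (m + if P z then Δ else 0))
      = p * (1 - p) * Δ := by
  have hterm (z : ι) : q z * (((if P z then 1 else 0) - p) * (m + if P z then Δ else 0))
      = (if P z then q z else 0) * (m + (1 - p) * Δ) - q z * (p * m) := by
    split_ifs <;> ring
  rw [sum_congr rfl fun z _ => hterm z, sum_sub_distrib, ← sum_mul, ← sum_mul, ← sum_filter,
    hq, hqP]
  ring

theorem period_specific_moment_identity_general
    {Ω : Type*} [MeasurableSpace Ω] (μ : Measure Ω) [IsProbabilityMeasure μ]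
    (J : ℕ)
    (Z : Ω → ℕ) (hZ : Measurable Z) (hZrange : ∀ ω, 1 ≤ Z ω ∧ Z ω ≤ J)
    (W : ℕ → ℕ → Ω → ℝ)
    (hWint : ∀ j, 1 ≤ j → j ≤ J → ∀ z, z ≤ j → Integrable (W j z) μ)
    (V : Ω → ℝ) (hVint : Integrable V μ)
    (hindep : IndepFun Z (fun ω => ((fun jz : ℕ × ℕ => W jz.1 jz.2 ω), V ω)) μ)
    (Y : ℕ → Ω → ℝ)
    (hY : ∀ j ω, Y j ω = if Z ω ≤ j then W j (Z ω) ω else W j 0 ω)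
    (p : ℕ → ℝ) (hp : ∀ j, p j = (μ {ω | Z ω ≤ j}).toReal)
    (Δ : ℕ → ℝ)
    (hΔ : ∀ j, 1 ≤ j → j ≤ J → ∀ z, 1 ≤ z → z ≤ j →
      ∫ ω, W j z ω ∂μ = (∫ ω, W j 0 ω ∂μ) + Δ j) :
    ∀ j, 1 ≤ j → j ≤ J →
      ∫ ω, ((if Z ω ≤ j then (1 : ℝ) else 0) - p j) * (Y j ω - V ω) ∂μ
        = p j * (1 - p j) * Δ j := by
  intro j hj1 hjJ
  let X (ω : Ω) : (ℕ × ℕ → ℝ) × ℝ := (fun jz => W jz.1 jz.2 ω, V ω)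
  let F (z : ℕ) (x : (ℕ × ℕ → ℝ) × ℝ) : ℝ :=
    ((if z ≤ j then 1 else 0) - p j) * ((if z ≤ j then x.1 (j, z) else x.1 (j, 0)) - x.2)
  have hZs (ω : Ω) : Z ω ∈ Icc 1 J := mem_Icc.mpr (hZrange ω)
  have hWj (z : ℕ) (hz : z ≤ j) : Integrable (W j z) μ := hWint j hj1 hjJ z hz
  have hF_meas (z : ℕ) : Measurable (F z) := by
    by_cases hz : z ≤ j <;> simp only [F, hz, if_true, if_false] <;> fun_prop
  have hF_int (z : ℕ) : Integrable (fun ω => F z (X ω)) μ := by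
    by_cases hz : z ≤ j
    · simpa [F, X, hz] using ((hWj z hz).sub hVint).const_mul _
    · simpa [F, X, hz] using ((hWj 0 j.zero_le).sub hVint).const_mul _
  have hF_mean (z : ℕ) (hz : z ∈ Icc 1 J) : ∫ ω, F z (X ω) ∂μ
      = ((if z ≤ j then 1 else 0) - p j)
          * ((∫ ω, W j 0 ω ∂μ - ∫ ω, V ω ∂μ) + if z ≤ j then Δ j else 0) := by
    by_cases hzj : z ≤ j
    · simp only [F, X, if_pos hzj, integral_const_mul, integral_sub (hWj z hzj) hVint,
        hΔ j hj1 hjJ z (mem_Icc.mp hz).1 hzj]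
      ring
    · simp only [F, X, if_neg hzj, integral_const_mul, integral_sub (hWj 0 j.zero_le) hVint]
      ring
  have hq : ∑ z ∈ Icc 1 J, μ.real (Z ⁻¹' {z}) = 1 := by
    simpa using sum_filter_measureReal_preimage_singleton (μ := μ) hZ hZs fun _ => True
  have hqP : ∑ z ∈ Icc 1 J with z ≤ j, μ.real (Z ⁻¹' {z}) = p j := by
    rw [hp, sum_filter_measureReal_preimage_singleton hZ hZs, measureReal_def]
  calc ∫ ω, ((if Z ω ≤ j then (1 : ℝ) else 0) - p j) * (Y j ω - V ω) ∂μ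
      = ∫ ω, F (Z ω) (X ω) ∂μ := by simp only [hY, F, X]
    _ = ∑ z ∈ Icc 1 J, μ.real (Z ⁻¹' {z}) * ∫ ω, F z (X ω) ∂μ :=
        hindep.integral_comp_eq_sum hZ hZs (fun z _ => hF_meas z) (fun z _ => hF_int z)
    _ = p j * (1 - p j) * Δ j := by
        rw [sum_congr rfl fun z hz => by rw [hF_mean z hz]]
        exact sum_mul_centered_indicator _ _ _ _ hq hqP

/-- Population-level unbiasedness of the estimating function under the period-specific
treatment-effect model in a stepped-wedge design: with randomized treatment-start period
`Z` valued in `{1, …, J}`, potential outcomes `W j z` (`z = 0` meaning not yet treated),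
an integrable adjustment term `V` independent (jointly with the potential outcomes) of
`Z`, observed outcome `Y j = W j Z` if `Z ≤ j` and `W j 0` otherwise, `p j = P(Z ≤ j)`,
and period-specific effects `Δ j` (`E[W j z] = E[W j 0] + Δ j` for `1 ≤ z ≤ j`),
we have `E[(1{Z≤j} - p j)(Y j - V)] = p j (1 - p j) Δ j` for each `1 ≤ j ≤ J`. -/
theorem period_specific_moment_identity
    {Ω : Type*} [MeasurableSpace Ω] (μ : Measure Ω) [IsProbabilityMeasure μ]
    (J : ℕ) (hJ : 1 ≤ J)
    (Z : Ω → ℕ) (hZ : Measurable Z) (hZrange : ∀ ω, 1 ≤ Z ω ∧ Z ω ≤ J)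
    (W : ℕ → ℕ → Ω → ℝ)
    (hWint : ∀ j, 1 ≤ j → j ≤ J → ∀ z, z ≤ j → Integrable (W j z) μ)
    (V : Ω → ℝ) (hVint : Integrable V μ)
    (hindep : IndepFun Z (fun ω => ((fun jz : ℕ × ℕ => W jz.1 jz.2 ω), V ω)) μ)
    (Y : ℕ → Ω → ℝ)
    (hY : ∀ j ω, Y j ω = if Z ω ≤ j then W j (Z ω) ω else W j 0 ω)
    (p : ℕ → ℝ) (hp : ∀ j, p j = (μ {ω | Z ω ≤ j}).toReal)
    (Δ : ℕ → ℝ)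
    (hΔ : ∀ j, 1 ≤ j → j ≤ J → ∀ z, 1 ≤ z → z ≤ j →
      ∫ ω, W j z ω ∂μ = (∫ ω, W j 0 ω ∂μ) + Δ j) :
    ∀ j, 1 ≤ j → j ≤ J →
      ∫ ω, ((if Z ω ≤ j then (1 : ℝ) else 0) - p j) * (Y j ω - V ω) ∂μ
        = p j * (1 - p j) * Δ j :=
  period_specific_moment_identity_general μ J Z hZ hZrange W hWint V hVint hindep Y hY p hp Δ hΔ
end

section
/- Let $(\Omega, \mathcal{F}, P)$ be a probability space, $J \ge 1$, $Z : \Omega \to \{1, \dots, J\}$ measurable, and for each period $j \in \{1, \dots, J\}$ and each $z \in \{0, 1, \dots, j\}$ let $W_{j,z}$ be an integrable real random variable. Let $V$ be an integrable real random variable, and assume $Z$ is independent of the random vector consisting of all $W_{j,z}$ and $V$. Define the observed outcome $Y_j(\omega) = W_{j, Z(\omega)}(\omega)$ if $Z(\omega) \le j$ and $Y_j(\omega) = W_{j,0}(\omega)$ otherwise, and let $\pi_z = P(Z = z)$. Assume the duration-specific treatment-effect model: there is a function $\Delta : \{1, \dots, J\} \to \mathbb{R}$ with $E[W_{j,z}]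 = E[W_{j,0}] + \Delta(j - z + 1)$ for every $j$ and every $1 \le z \le j$. Then for every $j \in \{1, \dots, J\}$ and every $z \in \{1, \dots, J\}$, $E\big[ (\mathbf{1}\{Z = z\} - \pi_z)(Y_j - V) \big] = \pi_z \Big( \mathbf{1}\{z \le j\}\, \Delta(j - z + 1) - \sum_{z' = 1}^{j} \pi_{z'}\, \Delta(j - z' + 1) \Big).$ -/
/-!
Write `f z'` for the value `Y j - V` takes on the event `Z = z'`, namely `W j z' - V` if
`z' ≤ j` and `W j 0 - V` otherwise. Then the integrand is `g (Z ω) ω` with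
`g z' = (1{z' = z} - π z) f z'`, and since `Z` is independent of every `f z'`, conditioning on
the value of `Z` gives `E[g (Z ω) ω] = ∑ z' π z' E[g z']`. Under the duration-specific model
`E[f z'] = c + 1{z' ≤ j} Δ (j - z' + 1)` with `c` not depending on `z'`, and the resulting
`π`-weighted covariance of `1{z' = z}` with `E[f z']` is the right-hand side: the constant `c`
drops out because `∑ π = 1`.
-/

open MeasureTheory ProbabilityTheory

section
variable {Ω ι : Type*} [MeasurableSpace Ω] {μ : Measure Ω} [MeasurableSpace ι]
  [MeasurableSingletonClass ι] {Z : Ω → ι}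

lemma IndepFun.setIntegral_preimage_singleton_eq_mul {F : Ω → ℝ} (hZ : Measurable Z)
    (hF : Integrable F μ) (hind : IndepFun Z F μ) (i : ι) :
    ∫ ω in Z ⁻¹' {i}, F ω ∂μ = μ.real (Z ⁻¹' {i}) * ∫ ω, F ω ∂μ := by
  have hA : MeasurableSet (Z ⁻¹' {i}) := hZ (measurableSet_singleton i)
  have hind_indicator : IndepFun ((Z ⁻¹' {i}).indicator (1 : Ω → ℝ)) F μ :=
    hind.comp (measurable_one.indicator (measurableSet_singleton i)) measurable_id
  calc ∫ ω in Z ⁻¹' {i}, F ω ∂μ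
      = ∫ ω, ((Z ⁻¹' {i}).indicator (1 : Ω → ℝ) * F) ω ∂μ := by
        rw [← integral_indicator hA]
        congr 1 with ω
        by_cases hω : ω ∈ Z ⁻¹' {i} <;> simp [hω]
    _ = μ.real (Z ⁻¹' {i}) * ∫ ω, F ω ∂μ := by
        rw [hind_indicator.integral_mul_eq_mul_integral
          (measurable_one.indicator hA).aestronglyMeasurable hF.aestronglyMeasurable,
          integral_indicator_one hA]

lemma integral_apply_eq_sum_of_indepFun (hZ : Measurable Z) {s : Finset ι} (hs : ∀ ω, Z ω ∈ s)
    {g : ι → Ω → ℝ} (hg : ∀ i ∈ s, Integrable (g i) μ) (hind : ∀ i ∈ s, IndepFun Z (g i) μ) :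
    ∫ ω, g (Z ω) ω ∂μ = ∑ i ∈ s, μ.real (Z ⁻¹' {i}) * ∫ ω, g i ω ∂μ := by
  have hdecomp : (fun ω => g (Z ω) ω) = fun ω => ∑ i ∈ s, (Z ⁻¹' {i}).indicator (g i) ω := by
    ext ω
    rw [Finset.sum_eq_single_of_mem (Z ω) (hs ω) fun i _ hi =>
        Set.indicator_of_notMem (show ω ∉ Z ⁻¹' {i} from fun h => hi h.symm) (g i),
      Set.indicator_of_mem (show ω ∈ Z ⁻¹' {Z ω} from rfl)]
  rw [hdecomp,
    integral_finsetSum _ fun i hi => (hg i hi).indicator (hZ (measurableSet_singleton i))]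
  refine Finset.sum_congr rfl fun i hi => ?_
  rw [integral_indicator (hZ (measurableSet_singleton i)),
    IndepFun.setIntegral_preimage_singleton_eq_mul hZ (hg i hi) (hind i hi)]

lemma sum_measureReal_preimage_singleton_of_forall_mem [IsProbabilityMeasure μ]
    (hZ : Measurable Z) {s : Finset ι} (hs : ∀ ω, Z ω ∈ s) :
    ∑ i ∈ s, μ.real (Z ⁻¹' {i}) = 1 := by
  rw [sum_measureReal_preimage_singleton _ fun _ _ => hZ (measurableSet_singleton _),
    Set.preimage_eq_univ_iff.mpr fun _ ⟨ω, hω⟩ => hω ▸ hs ω, probReal_univ]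

end

lemma Finset.sum_Icc_ite_le {M : Type*} [AddCommMonoid M] {a j J : ℕ} (hjJ : j ≤ J)
    (f : ℕ → M) :
    ∑ i ∈ Finset.Icc a J, (if i ≤ j then f i else 0) = ∑ i ∈ Finset.Icc a j, f i := by
  rw [← Finset.sum_filter]
  congr 1
  ext i
  simp only [Finset.mem_filter, Finset.mem_Icc]
  omega

lemma weighted_cov_indicator_eq {ι : Type*} [DecidableEq ι] {s : Finset ι} {p : ι → ℝ}
    (hp : ∑ i ∈ s, p i = 1) {z : ι} (hz : z ∈ s) (c : ℝ) (e : ι → ℝ) :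
    ∑ i ∈ s, p i * (((if i = z then 1 else 0) - p z) * (c + e i))
      = p z * (e z - ∑ i ∈ s, p i * e i) := by
  have h1 : ∑ i ∈ s, p i * ((if i = z then 1 else 0) * (c + e i)) = p z * (c + e z) := by
    simp [hz]
  have h2 : ∑ i ∈ s, p i * (p z * (c + e i))
      = p z * (c * ∑ i ∈ s, p i + ∑ i ∈ s, p i * e i) := by
    rw [Finset.mul_sum, ← Finset.sum_add_distrib, Finset.mul_sum]
    exact Finset.sum_congr rfl fun _ _ => by ring
  simp only [sub_mul, mul_sub, Finset.sum_sub_distrib, h1, h2, hp]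
  ring

theorem duration_specific_moment_identity_general
    {Ω : Type*} [MeasurableSpace Ω] (μ : Measure Ω) [IsProbabilityMeasure μ]
    (J : ℕ)
    (Z : Ω → ℕ) (hZ : Measurable Z) (hZrange : ∀ ω, 1 ≤ Z ω ∧ Z ω ≤ J)
    (W : ℕ → ℕ → Ω → ℝ)
    (hWint : ∀ j, 1 ≤ j → j ≤ J → ∀ z, z ≤ j → Integrable (W j z) μ)
    (V : Ω → ℝ) (hVint : Integrable V μ)
    (hindep : IndepFun Z (fun ω => ((fun jz : ℕ × ℕ => W jz.1 jz.2 ω), V ω)) μ)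
    (Y : ℕ → Ω → ℝ)
    (hY : ∀ j ω, Y j ω = if Z ω ≤ j then W j (Z ω) ω else W j 0 ω)
    (π : ℕ → ℝ) (hπ : ∀ z, π z = (μ {ω | Z ω = z}).toReal)
    (Δ : ℕ → ℝ)
    (hΔ : ∀ j, 1 ≤ j → j ≤ J → ∀ z, 1 ≤ z → z ≤ j →
      ∫ ω, W j z ω ∂μ = (∫ ω, W j 0 ω ∂μ) + Δ (j - z + 1)) :
    ∀ j, 1 ≤ j → j ≤ J → ∀ z, 1 ≤ z → z ≤ J →
      ∫ ω, ((if Z ω = z then (1 : ℝ) else 0) - π z) * (Y j ω - V ω) ∂μ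
        = π z * ((if z ≤ j then Δ (j - z + 1) else 0)
            - ∑ z' ∈ Finset.Icc 1 j, π z' * Δ (j - z' + 1)) := by
  intro j hj hjJ z hz hzJ
  set f : ℕ → Ω → ℝ := fun z' ω => W j (if z' ≤ j then z' else 0) ω - V ω
  set g : ℕ → Ω → ℝ := fun z' ω => ((if z' = z then 1 else 0) - π z) * f z' ω
  set c : ℝ := ∫ ω, W j 0 ω ∂μ - ∫ ω, V ω ∂μ
  set e : ℕ → ℝ := fun z' => if z' ≤ j then Δ (j - z' + 1) else 0
  have hZs (ω) : Z ω ∈ Finset.Icc 1 J := Finset.mem_Icc.mpr (hZrange ω)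
  have hπ' (z') : μ.real (Z ⁻¹' {z'}) = π z' := (hπ z').symm
  have hf_int (z') : Integrable (f z') μ :=
    (hWint j hj hjJ _ (by split_ifs <;> omega)).sub hVint
  have hf_mean (z') (hz' : 1 ≤ z') : ∫ ω, f z' ω ∂μ = c + e z' := by
    simp only [f, c, e]
    rw [integral_sub (hWint j hj hjJ _ (by split_ifs <;> omega)) hVint]
    split_ifs with h
    · rw [hΔ j hj hjJ z' hz' h]; ring
    · ring
  have hg_indep (z') : IndepFun Z (g z') μ :=
    hindep.comp (φ := id) (ψ := fun p : (ℕ × ℕ → ℝ) × ℝ =>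
      ((if z' = z then 1 else 0) - π z) * (p.1 (j, if z' ≤ j then z' else 0) - p.2))
      measurable_id (by fun_prop)
  calc ∫ ω, ((if Z ω = z then (1 : ℝ) else 0) - π z) * (Y j ω - V ω) ∂μ
      = ∫ ω, g (Z ω) ω ∂μ := by
        congr 1 with ω
        simp only [hY, g, f]
        split_ifs <;> rfl
    _ = ∑ z' ∈ Finset.Icc 1 J, π z' * (((if z' = z then 1 else 0) - π z) * (c + e z')) := by
        rw [integral_apply_eq_sum_of_indepFun hZ hZs (fun z' _ => (hf_int z').const_mul _)
          (fun z' _ => hg_indep z')]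
        refine Finset.sum_congr rfl fun z' hz' => ?_
        rw [hπ', integral_const_mul, hf_mean z' (Finset.mem_Icc.mp hz').1]
    _ = π z * (e z - ∑ z' ∈ Finset.Icc 1 J, π z' * e z') := by
        refine weighted_cov_indicator_eq ?_ (Finset.mem_Icc.mpr ⟨hz, hzJ⟩) c e
        simp_rw [← hπ', sum_measureReal_preimage_singleton_of_forall_mem hZ hZs]
    _ = _ := by
        simp only [e, mul_ite, mul_zero, Finset.sum_Icc_ite_le hjJ]

/-- Population-level moment identity under the duration-specific treatment-effect model
in a stepped-wedge design: with randomized treatment-start period `Z` valued in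
`{1, …, J}`, potential outcomes `W j z` (`z = 0` meaning not yet treated), an integrable
adjustment term `V` independent (jointly with the potential outcomes) of `Z`, observed
outcome `Y j = W j Z` if `Z ≤ j` and `W j 0` otherwise, `π z = P(Z = z)`, and
duration-specific effects (`E[W j z] = E[W j 0] + Δ (j - z + 1)` for `1 ≤ z ≤ j`),
we have, for all `1 ≤ j ≤ J` and `1 ≤ z ≤ J`,
`E[(1{Z = z} - π z)(Y j - V)]
  = π z (1{z ≤ j} Δ (j - z + 1) - ∑_{z'=1}^{j} π z' Δ (j - z' + 1))`. -/
theorem duration_specific_moment_identity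
    {Ω : Type*} [MeasurableSpace Ω] (μ : Measure Ω) [IsProbabilityMeasure μ]
    (J : ℕ) (hJ : 1 ≤ J)
    (Z : Ω → ℕ) (hZ : Measurable Z) (hZrange : ∀ ω, 1 ≤ Z ω ∧ Z ω ≤ J)
    (W : ℕ → ℕ → Ω → ℝ)
    (hWint : ∀ j, 1 ≤ j → j ≤ J → ∀ z, z ≤ j → Integrable (W j z) μ)
    (V : Ω → ℝ) (hVint : Integrable V μ)
    (hindep : IndepFun Z (fun ω => ((fun jz : ℕ × ℕ => W jz.1 jz.2 ω), V ω)) μ)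
    (Y : ℕ → Ω → ℝ)
    (hY : ∀ j ω, Y j ω = if Z ω ≤ j then W j (Z ω) ω else W j 0 ω)
    (π : ℕ → ℝ) (hπ : ∀ z, π z = (μ {ω | Z ω = z}).toReal)
    (Δ : ℕ → ℝ)
    (hΔ : ∀ j, 1 ≤ j → j ≤ J → ∀ z, 1 ≤ z → z ≤ j →
      ∫ ω, W j z ω ∂μ = (∫ ω, W j 0 ω ∂μ) + Δ (j - z + 1)) :
    ∀ j, 1 ≤ j → j ≤ J → ∀ z, 1 ≤ z → z ≤ J →
      ∫ ω, ((if Z ω = z then (1 : ℝ) else 0) - π z) * (Y j ω - V ω) ∂μ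
        = π z * ((if z ≤ j then Δ (j - z + 1) else 0)
            - ∑ z' ∈ Finset.Icc 1 j, π z' * Δ (j - z' + 1)) :=
  duration_specific_moment_identity_general μ J Z hZ hZrange W hWint V hVint hindep Y hY π hπ Δ hΔ
end

section
/- Let $(\Omega, \mathcal{F}, P)$ be a probability space, let $\mathcal{G} \subseteq \mathcal{F}$ and $\mathcal{H} \subseteq \mathcal{G}$ be sub-$\sigma$-algebras, and let $Y$ be a square-integrable real random variable. Suppose the conditional expectation of $Y$ given $\mathcal{G}$ decomposes as $E[Y \mid \mathcal{G}] = c + \bar{g}$ almost surely, where $c$ is a bounded $\mathcal{G}$-measurable random variable and $\bar{g}$ is a square-integrable $\mathcal{H}$-measurable random variable. Let $f$ be a bounded $\mathcal{G}$-measurable random variable. Then for every square-integrable $\mathcal{H}$-measurable random variable $g$, $E\big[ f^2 (Y - c - g)^2 \big] \;\ge\; E\big[ f^2 (Y - c - \bar{g})^2 \big].$ -/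
/-!
The residual `Y - E[Y | 𝒢]` is orthogonal to every square-integrable `𝒢`-measurable variable,
and for a bounded `𝒢`-measurable weight `w` the difference `w (E[Y | 𝒢] - Z)` of any
`𝒢`-measurable predictor `Z` is such a variable. Hence `E[w (Y - Z)²]` splits as
`E[w (Y - E[Y | 𝒢])²] + E[w (E[Y | 𝒢] - Z)²]`, which for `w = f² ≥ 0` is minimised by
`Z = E[Y | 𝒢]`. The decomposition `E[Y | 𝒢] = c + ḡ` identifies the left-hand side with that
minimum, and `c + g` is a competing `𝒢`-measurable predictor.
-/

open MeasureTheory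
open scoped ENNReal

namespace MeasureTheory

variable {Ω : Type*} {m m₀ : MeasurableSpace Ω} {μ : Measure Ω} [IsFiniteMeasure μ]

theorem integral_mul_sub_condExp_eq_zero (hm : m ≤ m₀) {v Y : Ω → ℝ}
    (hv : AEStronglyMeasurable[m] v μ) (hv₂ : MemLp v 2 μ) (hY : MemLp Y 2 μ) :
    ∫ ω, v ω * (Y ω - μ[Y | m] ω) ∂μ = 0 := by
  have hvY : Integrable (v * Y) μ := hv₂.integrable_mul hY
  have hvY' : Integrable (v * μ[Y | m]) μ := hv₂.integrable_mul (hY.condExp one_le_two)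
  calc ∫ ω, v ω * (Y ω - μ[Y | m] ω) ∂μ
      = ∫ ω, (v * Y) ω ∂μ - ∫ ω, (v * μ[Y | m]) ω ∂μ := by
        simp only [mul_sub, Pi.mul_apply]
        exact integral_sub hvY hvY'
    _ = 0 := by
        rw [← integral_condExp hm (f := v * Y),
          integral_congr_ae (condExp_mul_of_aestronglyMeasurable_left hv hvY
            (hY.integrable one_le_two)), sub_self]

theorem integral_mul_sub_sq_eq_add (hm : m ≤ m₀) {w Y Z : Ω → ℝ}
    (hw : AEStronglyMeasurable[m] w μ) (hw_top : MemLp w ∞ μ) (hY : MemLp Y 2 μ)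
    (hZ : AEStronglyMeasurable[m] Z μ) (hZ₂ : MemLp Z 2 μ) :
    ∫ ω, w ω * (Y ω - Z ω) ^ 2 ∂μ
      = ∫ ω, w ω * (Y ω - μ[Y | m] ω) ^ 2 ∂μ + ∫ ω, w ω * (μ[Y | m] ω - Z ω) ^ 2 ∂μ := by
  set Ŷ := μ[Y | m]
  have hŶ : MemLp Ŷ 2 μ := hY.condExp one_le_two
  have hv : MemLp (fun ω => w ω * (Ŷ ω - Z ω)) 2 μ := (hŶ.sub hZ₂).mul' hw_top
  have hres : Integrable (fun ω => w ω * (Y ω - Ŷ ω) ^ 2) μ :=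
    (hY.sub hŶ).integrable_sq.mul_of_top_right hw_top
  have hcross : Integrable (fun ω => 2 * (w ω * (Ŷ ω - Z ω) * (Y ω - Ŷ ω))) μ :=
    (hv.integrable_mul (hY.sub hŶ)).const_mul 2
  have hfit : Integrable (fun ω => w ω * (Ŷ ω - Z ω) ^ 2) μ :=
    (hŶ.sub hZ₂).integrable_sq.mul_of_top_right hw_top
  have hortho : ∫ ω, w ω * (Ŷ ω - Z ω) * (Y ω - Ŷ ω) ∂μ = 0 :=
    integral_mul_sub_condExp_eq_zero hm
      (hw.mul (stronglyMeasurable_condExp.aestronglyMeasurable.sub hZ)) hv hY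
  calc ∫ ω, w ω * (Y ω - Z ω) ^ 2 ∂μ
      = ∫ ω, w ω * (Y ω - Ŷ ω) ^ 2 + 2 * (w ω * (Ŷ ω - Z ω) * (Y ω - Ŷ ω))
          + w ω * (Ŷ ω - Z ω) ^ 2 ∂μ := by
        congr 1; ext ω; ring
    _ = _ := by
        rw [integral_add _ hfit, integral_add hres hcross, integral_const_mul, hortho, mul_zero,
          add_zero]
        exact hres.add hcross

theorem integral_mul_sub_condExp_sq_le (hm : m ≤ m₀) {w Y Z : Ω → ℝ}
    (hw : AEStronglyMeasurable[m] w μ) (hw_top : MemLp w ∞ μ) (hw_nonneg : 0 ≤ᵐ[μ] w)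
    (hY : MemLp Y 2 μ) (hZ : AEStronglyMeasurable[m] Z μ) (hZ₂ : MemLp Z 2 μ) :
    ∫ ω, w ω * (Y ω - μ[Y | m] ω) ^ 2 ∂μ ≤ ∫ ω, w ω * (Y ω - Z ω) ^ 2 ∂μ := by
  rw [integral_mul_sub_sq_eq_add hm hw hw_top hY hZ hZ₂, le_add_iff_nonneg_right]
  exact integral_nonneg_of_ae <| by
    filter_upwards [hw_nonneg] with ω hω using mul_nonneg hω (sq_nonneg _)

end MeasureTheory

theorem nuisance_limit_optimality_general
    {Ω : Type*} {m : MeasurableSpace Ω} {μ : Measure Ω} [IsProbabilityMeasure μ]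
    (𝒢 ℋ : MeasurableSpace Ω) (h𝒢 : 𝒢 ≤ m) (hℋ : ℋ ≤ 𝒢)
    (Y : Ω → ℝ) (hY : MemLp Y 2 μ)
    (c : Ω → ℝ) (hc_meas : Measurable[𝒢] c) (Mc : ℝ) (hc_bdd : ∀ ω, |c ω| ≤ Mc)
    (gbar : Ω → ℝ)
    (hdecomp : μ[Y | 𝒢] =ᵐ[μ] fun ω => c ω + gbar ω)
    (f : Ω → ℝ) (hf_meas : Measurable[𝒢] f) (Mf : ℝ) (hf_bdd : ∀ ω, |f ω| ≤ Mf) :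
    ∀ g : Ω → ℝ, Measurable[ℋ] g → MemLp g 2 μ →
      ∫ ω, (f ω) ^ 2 * (Y ω - c ω - gbar ω) ^ 2 ∂μ
        ≤ ∫ ω, (f ω) ^ 2 * (Y ω - c ω - g ω) ^ 2 ∂μ := by
  intro g hg_meas hg
  have hc : MemLp c 2 μ :=
    MemLp.of_bound (hc_meas.mono h𝒢 le_rfl).aestronglyMeasurable Mc (.of_forall hc_bdd)
  have hf_sq : MemLp (fun ω => f ω ^ 2) ∞ μ :=
    memLp_top_of_bound ((hf_meas.mono h𝒢 le_rfl).pow_const 2).aestronglyMeasurable (Mf ^ 2)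
      (.of_forall fun ω => by simpa [abs_pow] using pow_le_pow_left₀ (abs_nonneg _) (hf_bdd ω) 2)
  have hlhs : ∫ ω, f ω ^ 2 * (Y ω - c ω - gbar ω) ^ 2 ∂μ
      = ∫ ω, f ω ^ 2 * (Y ω - μ[Y | 𝒢] ω) ^ 2 ∂μ :=
    integral_congr_ae (by filter_upwards [hdecomp] with ω hω; rw [hω, sub_sub])
  simp_rw [hlhs, sub_sub]
  exact integral_mul_sub_condExp_sq_le h𝒢 (hf_meas.pow_const 2).aestronglyMeasurable hf_sq
    (.of_forall fun ω => sq_nonneg (f ω)) hY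
    (hc_meas.add (hg_meas.mono hℋ le_rfl)).aestronglyMeasurable (hc.add hg)

/-- Optimality of the true nuisance function (population content of Theorem 1):
let `𝒢 ≤ m` and `ℋ ≤ 𝒢` be sub-σ-algebras, `Y` square-integrable with
`E[Y | 𝒢] = c + ḡ` a.s., where `c` is bounded `𝒢`-measurable and `ḡ` is
square-integrable `ℋ`-measurable, and let `f` be bounded `𝒢`-measurable. Then for
every square-integrable `ℋ`-measurable `g`,
`E[f² (Y - c - g)²] ≥ E[f² (Y - c - ḡ)²]`. -/
theorem nuisance_limit_optimality
    {Ω : Type*} {m : MeasurableSpace Ω} {μ : Measure Ω} [IsProbabilityMeasure μ]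
    (𝒢 ℋ : MeasurableSpace Ω) (h𝒢 : 𝒢 ≤ m) (hℋ : ℋ ≤ 𝒢)
    (Y : Ω → ℝ) (hY : MemLp Y 2 μ)
    (c : Ω → ℝ) (hc_meas : Measurable[𝒢] c) (Mc : ℝ) (hc_bdd : ∀ ω, |c ω| ≤ Mc)
    (gbar : Ω → ℝ) (hgbar_meas : Measurable[ℋ] gbar) (hgbar : MemLp gbar 2 μ)
    (hdecomp : μ[Y | 𝒢] =ᵐ[μ] fun ω => c ω + gbar ω)
    (f : Ω → ℝ) (hf_meas : Measurable[𝒢] f) (Mf : ℝ) (hf_bdd : ∀ ω, |f ω| ≤ Mf) :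
    ∀ g : Ω → ℝ, Measurable[ℋ] g → MemLp g 2 μ →
      ∫ ω, (f ω) ^ 2 * (Y ω - c ω - gbar ω) ^ 2 ∂μ
        ≤ ∫ ω, (f ω) ^ 2 * (Y ω - c ω - g ω) ^ 2 ∂μ :=
  nuisance_limit_optimality_general 𝒢 ℋ h𝒢 hℋ Y hY c hc_meas Mc hc_bdd gbar hdecomp f hf_meas Mf
    hf_bdd
end
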